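/- Common knowledge among some triple implies safety: for every epistemic model M and state s, if M,s ⊨ ⋁_{G∈N³} C_G φ then M,s ⊨ ▲φ, where C_G is common knowledge in group G. The converse fails: there is a model and state where ▲φ holds but no 3-agent group has common knowledge of φ. -/

import Mathlib

/-- An epistemic (Kripke) model over agent set `Agt` and state set `St`. -/
structure Model (Agt : Type) (St : Type) where
  rel : Agt → St → St → Prop
  val : ℕ → St → Prop

/-- The model is an epistemic model proper: each agent's relation is an equivalence. -/
def isEquivModel {Agt St : Type} (M : Model Agt St) : Prop :=
  ∀ a, Equivalence (M.rel a)

/-- Formulas: atoms, ⊥, →, ∧, K_a, ▲ (safety), [φ⟡]ψ (pseudo-anonymous announcement),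
    [φ⟡!]ψ (safe/intentional anonymous announcement). -/
inductive Form (Agt : Type) : Type where
  | atom : ℕ → Form Agt
  | bot  : Form Agt
  | imp  : Form Agt → Form Agt → Form Agt
  | and  : Form Agt → Form Agt → Form Agt
  | K    : Agt → Form Agt → Form Agt
  | tri  : Form Agt → Form Agt
  | annA : Form Agt → Form Agt → Form Agt
  | annS : Form Agt → Form Agt → Form Agt

def Form.neg {Agt : Type} (φ : Form Agt) : Form Agt := .imp φ .bot

/-- One step of the safety operator: `⋁_{G ∈ N³} E_G (P ∧ X)`. -/
def fsafe {Agt St : Type} (M : Model Agt St) (P X : St → Prop) (s : St) : Prop :=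
  ∃ G : Finset Agt, G.card = 3 ∧ ∀ a ∈ G, ∀ t, M.rel a s t → P t ∧ X t

/-- `▲P` semantically: greatest fixpoint of `fsafe M P`, i.e. union of post-fixed points. -/
def triSem {Agt St : Type} (M : Model Agt St) (P : St → Prop) (s : St) : Prop :=
  ∃ X : St → Prop, X s ∧ ∀ t, X t → fsafe M P X t

/-- Product update of `M` with an action model whose events are `E`, relation `arel`, and
    (semantic) preconditions `pre`.  States not satisfying the precondition are cut off
    from the relation (this encodes the restriction to legal states). -/
def prodUpd {Agt St E : Type} (M : Model Agt St) (arel : Agt → E → E → Prop)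
    (pre : E → St → Prop) : Model Agt (St × E) where
  rel c p q := pre p.2 p.1 ∧ pre q.2 q.1 ∧ M.rel c p.1 q.1 ∧ arel c p.2 q.2
  val n p := M.val n p.1

/-- Action relation of the pseudo-anonymous action model: `a ∼_c b` iff `(a = c ↔ b = c)`. -/
def anonRel {Agt : Type} (c a b : Agt) : Prop := (a = c ↔ b = c)

/-- The pseudo-anonymous style update `M^{φ⟡}` (with precondition `pre a`). -/
def updA {Agt St : Type} (M : Model Agt St) (pre : Agt → St → Prop) : Model Agt (St × Agt) :=
  prodUpd M anonRel pre

/-- Satisfaction. -/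
def Sat {Agt : Type} : {St : Type} → Model Agt St → St → Form Agt → Prop
  | _, M, s, .atom n => M.val n s
  | _, _, _, .bot => False
  | _, M, s, .imp φ ψ => Sat M s φ → Sat M s ψ
  | _, M, s, .and φ ψ => Sat M s φ ∧ Sat M s ψ
  | _, M, s, .K a φ => ∀ t, M.rel a s t → Sat M t φ
  | _, M, s, .tri φ => triSem M (fun t => Sat M t φ) s
  | _, M, s, .annA φ ψ => ∀ a, (∀ t, M.rel a s t → Sat M t φ) →
      Sat (updA M (fun b t => ∀ u, M.rel b t u → Sat M u φ)) (s, a) ψ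
  | _, M, s, .annS φ ψ => ∀ a, (∀ t, M.rel a s t → triSem M (fun u => Sat M u φ) t) →
      Sat (updA M (fun b t => ∀ u, M.rel b t u → triSem M (fun v => Sat M v φ) u)) (s, a) ψ

/-- The pseudo-anonymous update `M^{φ⟡}`. -/
def updAnn {Agt St : Type} (M : Model Agt St) (φ : Form Agt) : Model Agt (St × Agt) :=
  updA M (fun b t => ∀ u, M.rel b t u → Sat M u φ)

/-- The safe (intentional) anonymous update `M^{φ⟡!}`. -/
def updSafe {Agt St : Type} (M : Model Agt St) (φ : Form Agt) : Model Agt (St × Agt) :=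
  updA M (fun b t => ∀ u, M.rel b t u → triSem M (fun v => Sat M v φ) u)

/-- Public announcement update: restriction of `M` to `P` (encoded by cutting the relation). -/
def restrict {Agt St : Type} (M : Model Agt St) (P : St → Prop) : Model Agt St where
  rel a x y := P x ∧ P y ∧ M.rel a x y
  val := M.val

/-- Iterative approximations `▲_n`. -/
def triN {Agt St : Type} (M : Model Agt St) (P : St → Prop) : ℕ → St → Prop
  | 0 => P
  | n + 1 => fun s => P s ∧ ∃ G : Finset Agt, G.card = 3 ∧
      ∀ a ∈ G, ∀ t, M.rel a s t → triN M P n t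

/-- Standard bisimulation between two models. -/
structure Bisim {Agt St₁ St₂ : Type} (M₁ : Model Agt St₁) (M₂ : Model Agt St₂)
    (Z : St₁ → St₂ → Prop) : Prop where
  atoms : ∀ s t, Z s t → ∀ n, (M₁.val n s ↔ M₂.val n t)
  forth : ∀ s t, Z s t → ∀ a u, M₁.rel a s u → ∃ v, M₂.rel a t v ∧ Z u v
  back  : ∀ s t, Z s t → ∀ a v, M₂.rel a t v → ∃ u, M₁.rel a s u ∧ Z u v

/-- `f` is a group assignment function for `M`. -/
def GroupAssign {Agt St : Type} (M : Model Agt St) (f : St → Finset Agt) : Prop :=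
  (∀ t, f t = ∅ ∨ (f t).card = 3) ∧
  (∀ t t' i, i ∈ f t → M.rel i t t' → f t' ≠ ∅)

/-- `σ : Fin (m+1) → St` is an `f`-consistent path. -/
def FPath {Agt St : Type} (M : Model Agt St) (f : St → Finset Agt) (m : ℕ)
    (σ : Fin (m + 1) → St) : Prop :=
  ∀ k : Fin m, ∃ a ∈ f (σ k.castSucc), M.rel a (σ k.castSucc) (σ k.succ)

/-- Common knowledge in group `G` (semantically): `φ` holds at every state reachable by a
finite path of `∼_i`-steps with `i ∈ G`. -/
def CK {Agt St : Type} (M : Model Agt St) (G : Finset Agt) (P : St → Prop) (s : St) : Prop :=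
  ∀ t, Relation.ReflTransGen (fun x y => ∃ a ∈ G, M.rel a x y) s t → P t

/-!
Common knowledge of `φ` in a triple `G` is itself a post-fixed point of the safety operator:
every `G`-step from a state where `C_G φ` holds lands in a state where `φ` and `C_G φ` hold.
For the converse, safety only asks for *some* triple at each state, and that triple may
change along a path: in the counterexample the safe states `0` and `1` are witnessed by
`{0, 1, 2}` and `{0, 1, 3}`, while every triple contains agent `3`, who reaches unsafe `2`
from `0`, or agents `0` and `2`, who together reach unsafe `3` through `1`.
-/

section CommonKnowledge

variable {Agt St : Type} {M : Model Agt St} {G : Finset Agt} {P : St → Prop} {s t : St}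

theorem CK.self (h : CK M G P s) : P s :=
  h s .refl

theorem CK.of_rel (h : CK M G P s) {a : Agt} (ha : a ∈ G) (hst : M.rel a s t) : CK M G P t :=
  fun u hu => h u (.head ⟨a, ha, hst⟩ hu)

theorem CK.triSem (hG : G.card = 3) (h : CK M G P s) : triSem M P s :=
  ⟨CK M G P, h, fun _ ht =>
    ⟨G, hG, fun _ ha _ hrel => ⟨(ht.of_rel ha hrel).self, ht.of_rel ha hrel⟩⟩⟩

end CommonKnowledge

def cellModel {Agt St β : Type} (cell : Agt → St → β) (val : ℕ → St → Prop) :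
    Model Agt St where
  rel i x y := cell i x = cell i y
  val := val

theorem isEquivModel_cellModel {Agt St β : Type} (cell : Agt → St → β)
    (val : ℕ → St → Prop) : isEquivModel (cellModel cell val) :=
  fun i => InvImage.equivalence _ (cell i) eq_equivalence

/-- Row `i` lists the cell of each state for agent `i`: agent `0` confuses states `0, 1`,
agent `2` confuses `1, 3`, agent `3` confuses `0, 2`, and agent `1` confuses nothing. -/
def counterCell : Fin 4 → Fin 4 → Fin 4 :=
  ![![0, 0, 2, 3], ![0, 1, 2, 3], ![0, 1, 2, 1], ![0, 1, 0, 3]]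

def counterModel : Model (Fin 4) (Fin 4) :=
  cellModel counterCell fun _ t => t < 2

theorem counterModel_sat_tri : Sat counterModel 0 (.tri (.atom 0)) := by
  refine ⟨fun t => t < 2, by decide, ?_⟩
  show ∀ t : Fin 4, t < 2 → ∃ G : Finset (Fin 4), G.card = 3 ∧
    ∀ a ∈ G, ∀ u, counterCell a t = counterCell a u → u < 2 ∧ u < 2
  decide

theorem mem_three_or_mem_zero_two_of_card_eq_three (G : Finset (Fin 4)) (hG : G.card = 3) :
    3 ∈ G ∨ (0 ∈ G ∧ 2 ∈ G) := by
  revert G; decide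

theorem counterModel_not_CK (G : Finset (Fin 4)) (hG : G.card = 3) :
    ¬ CK counterModel G (fun t => Sat counterModel t (.atom 0)) 0 := by
  intro hCK
  rcases mem_three_or_mem_zero_two_of_card_eq_three G hG with h3 | ⟨h0, h2⟩
  · exact absurd (hCK 2 (.single ⟨3, h3, rfl⟩)) (by decide : ¬ (2 : Fin 4) < 2)
  · exact absurd (hCK 3 (.head (b := 1) ⟨0, h0, rfl⟩ (.single ⟨2, h2, rfl⟩)))
      (by decide : ¬ (3 : Fin 4) < 2)

theorem stmt14 :
    (∀ (Agt St : Type) [Fintype Agt] (M : Model Agt St), isEquivModel M →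
      ∀ (s : St) (φ : Form Agt),
        (∃ G : Finset Agt, G.card = 3 ∧ CK M G (fun t => Sat M t φ) s) →
        Sat M s (.tri φ)) ∧
    (∃ (St : Type) (M : Model (Fin 4) St), isEquivModel M ∧
      ∃ (s : St) (φ : Form (Fin 4)),
        Sat M s (.tri φ) ∧
        ¬ ∃ G : Finset (Fin 4), G.card = 3 ∧ CK M G (fun t => Sat M t φ) s) :=
  ⟨fun _ _ _ _ _ _ _ ⟨_, hG, hCK⟩ => hCK.triSem hG,
    ⟨Fin 4, counterModel, isEquivModel_cellModel _ _, 0, .atom 0, counterModel_sat_tri,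
      fun ⟨G, hG, hCK⟩ => counterModel_not_CK G hG hCK⟩⟩
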